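/- For every natural number n, p₋₈(8n+7) ≡ 0 (mod 2¹¹), i.e., 2048 divides p₋₈(8n+7). -/

import Mathlib

open PowerSeries Finset

/-- `E k` is the formal power series `∏_{m ≥ 1} (1 - q^(k*m))` in `ℤ⟦q⟧`:
its coefficient of `qⁿ` only depends on the finitely many factors with `k*m ≤ n`
(for `k ≥ 1`), so we may define it coefficientwise via the finite product over
`1 ≤ m ≤ n`. -/
noncomputable def E (k : ℕ) : PowerSeries ℤ :=
  PowerSeries.mk fun n =>
    PowerSeries.coeff n
      (∏ m ∈ Finset.Icc 1 n, (1 - (PowerSeries.X : PowerSeries ℤ) ^ (k * m)))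

/-- The multiplicative inverse of `E k` in `ℤ⟦q⟧` (its constant term is `1`). -/
noncomputable def Einv (k : ℕ) : PowerSeries ℤ := (E k).invOfUnit 1


lemma constantCoeff_E (k : ℕ) : PowerSeries.constantCoeff (E k) = 1 := by
  simp [E]

/-- `E 1` as a unit of `ℤ⟦q⟧`. -/
noncomputable def E1unit : (PowerSeries ℤ)ˣ :=
  ⟨E 1, Einv 1,
    (E 1).mul_invOfUnit 1 (by simp [constantCoeff_E]),
    (E 1).invOfUnit_mul 1 (by simp [constantCoeff_E])⟩

/-- For `r : ℤ`, `pr r n` is the coefficient of `qⁿ` in `E₁ʳ`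
(integer powers are taken in the unit group of `ℤ⟦q⟧`). -/
noncomputable def pr (r : ℤ) (n : ℕ) : ℤ :=
  PowerSeries.coeff n ((E1unit ^ r : (PowerSeries ℤ)ˣ) : PowerSeries ℤ)

/-!
Write `ψ = ∑_{k ≥ 0} q^{k(k+1)/2}`, `φ = ∑_{k ∈ ℤ} q^{k²}`, `σ f = f(q²)` and
`U f = ∑ₙ [q^{2n+1}] f · qⁿ`, so that `U (f · σ g) = U f · g`. Gauss's identities `ψ E₁ = E₂²` and
`φ E₁² E₄² = E₂⁵` come from a finite form of Jacobi's triple product (a bilateral sum of Gaussian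
binomial coefficients) by an `X`-adic limit; they give `E₁⁻¹ = ψ · σ(E₁⁻²)` and `ψ² = φ · σ ψ`.
Splitting `k²` by the parity of `k` gives `φ = σ²φ + 2q σ³ψ`, and from it
`φ² = σ(φ²) + 4q σ²(ψ²)`. Hence `∑ₙ p₋₈(8n+7) qⁿ = U³(E₁⁻⁸) = 8 U(U(φ¹²) · ψ¹² E₁⁻³²)`, where
`U(φ¹²) ≡ 24 φ¹⁰ σ(ψ²) (mod 256)`; after one more use of `ψ² = φ · σ ψ` the remaining term carries
the factor `U(φ³²)`, divisible by `64` because `φ² ≡ σ(φ²) (mod 4)` lifts to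
`φ³² ≡ σ(φ³²) (mod 64)`.
-/

local notation:50 f " ≡ " g " [X^" n "]" => SModEq (Ideal.span {(PowerSeries.X : _⟦X⟧) ^ n}) f g

local notation "σ" => PowerSeries.expand 2 two_ne_zero

theorem SModEq.of_mul_right_of_isUnit {A : Type*} [CommRing A] {I : Ideal A} {x y u : A}
    (hu : IsUnit u) (h : x * u ≡ y * u [SMOD I]) : x ≡ y [SMOD I] := by
  obtain ⟨v, rfl⟩ := hu
  simpa [mul_assoc] using h.mul (SModEq.refl ((v⁻¹ : Aˣ) : A))

theorem Finset.prod_range_two_mul {M : Type*} [CommMonoid M] (f : ℕ → M) (N : ℕ) :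
    ∏ i ∈ range (2 * N), f i = ∏ j ∈ range N, f (2 * j) * f (2 * j + 1) := by
  induction N with
  | zero => simp
  | succ N ih => rw [mul_add_one, prod_range_succ, prod_range_succ, ih, prod_range_succ, mul_assoc]

theorem Finset.sum_Icc_add_eq_of_abs_gt {M : Type*} [AddCommMonoid M] {f : ℤ → M} {N : ℕ}
    (hf : ∀ k, (N : ℤ) < |k| → f k = 0) {c : ℤ} (hc : |c| ≤ 1) :
    ∑ k ∈ Icc (-(N + 1 : ℤ)) (N + 1), f (k + c) = ∑ k ∈ Icc (-N : ℤ) N, f k := by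
  have hmap := sum_map (Icc (-(N + 1 : ℤ)) (N + 1)) (addRightEmbedding c) f
  simp only [addRightEmbedding_apply, map_add_right_Icc] at hmap
  rw [← hmap]
  refine (sum_subset (Icc_subset_Icc ?_ ?_) fun k hk hk' => hf k ?_).symm
  · have := (abs_le.1 hc).2; omega
  · have := (abs_le.1 hc).1; omega
  · simp only [mem_Icc, not_and_or, not_le] at hk'
    rcases hk' with h | h <;> [rw [abs_of_neg (by omega)]; rw [abs_of_pos (by omega)]] <;> omega

namespace PowerSeries

variable {R : Type*} [CommRing R]

theorem smodEq_X_pow_iff {n : ℕ} {f g : R⟦X⟧} :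
    f ≡ g [X^ n] ↔ ∀ m < n, coeff m f = coeff m g := by
  simp only [SModEq.sub_mem, Ideal.mem_span_singleton, X_pow_dvd_iff, map_sub, sub_eq_zero]

theorem eq_of_forall_smodEq_X_pow_succ {f g : R⟦X⟧} (h : ∀ n, f ≡ g [X^ (n + 1)]) : f = g :=
  ext fun n => smodEq_X_pow_iff.1 (h n) n n.lt_succ_self

theorem X_pow_mul_smodEq_zero {n e : ℕ} (h : n ≤ e) (f : R⟦X⟧) : X ^ e * f ≡ 0 [X^ n] := by
  rw [SModEq.zero, Ideal.mem_span_singleton]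
  exact (pow_dvd_pow X h).mul_right f

theorem one_sub_X_pow_smodEq_one {n e : ℕ} (h : n ≤ e) : (1 - X ^ e : R⟦X⟧) ≡ 1 [X^ n] := by
  simpa using SModEq.rfl.sub (X_pow_mul_smodEq_zero h (1 : R⟦X⟧))

theorem one_add_X_pow_smodEq_one {n e : ℕ} (h : n ≤ e) : (1 + X ^ e : R⟦X⟧) ≡ 1 [X^ n] := by
  simpa using SModEq.rfl.add (X_pow_mul_smodEq_zero h (1 : R⟦X⟧))

theorem expand_smodEq {p : ℕ} (hp : p ≠ 0) {n : ℕ} {f g : R⟦X⟧} (h : f ≡ g [X^ n]) :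
    expand p hp f ≡ expand p hp g [X^ n] := by
  rw [SModEq.sub_mem, Ideal.mem_span_singleton] at h ⊢
  obtain ⟨c, hc⟩ := h
  rw [← map_sub, hc, map_mul, map_pow, expand_X, ← pow_mul]
  exact (pow_dvd_pow X (Nat.le_mul_of_pos_left n (Nat.pos_of_ne_zero hp))).mul_right _

noncomputable def partialEuler (w m : ℕ) : R⟦X⟧ := ∏ j ∈ range m, (1 - X ^ (w * (j + 1)))

theorem partialEuler_succ (w m : ℕ) :
    (partialEuler w (m + 1) : R⟦X⟧) = partialEuler w m * (1 - X ^ (w * (m + 1))) :=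
  prod_range_succ _ _

theorem isUnit_partialEuler {w : ℕ} (hw : 0 < w) (m : ℕ) : IsUnit (partialEuler w m : R⟦X⟧) :=
  isUnit_iff_constantCoeff.2 <| by simp [partialEuler, map_prod, hw.ne']

theorem expand_partialEuler {p : ℕ} (hp : p ≠ 0) (w m : ℕ) :
    expand p hp (partialEuler w m : R⟦X⟧) = partialEuler (p * w) m := by
  simp [partialEuler, map_prod, ← pow_mul, mul_assoc, mul_comm p]

theorem partialEuler_smodEq {w : ℕ} (hw : 0 < w) {i m : ℕ} (him : i ≤ m) :
    (partialEuler w m : R⟦X⟧) ≡ partialEuler w i [X^ (i + 1)] := by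
  unfold partialEuler
  rw [← prod_range_mul_prod_Ico _ him]
  have : ∏ j ∈ Ico i m, (1 - X ^ (w * (j + 1)) : R⟦X⟧) ≡ ∏ j ∈ Ico i m, 1 [X^ (i + 1)] :=
    SModEq.prod fun j hj => one_sub_X_pow_smodEq_one <| by
      have := (mem_Ico.1 hj).1; nlinarith
  simpa using SModEq.rfl.mul this

theorem partialEuler_mul_prod_one_add (w N : ℕ) :
    (partialEuler w N : R⟦X⟧) * ∏ j ∈ range N, (1 + X ^ (w * (j + 1))) =
      partialEuler (2 * w) N := by
  rw [partialEuler, partialEuler, ← prod_mul_distrib]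
  exact prod_congr rfl fun j _ => by ring

theorem partialEuler_mul_partialEuler_mul_prod (N : ℕ) :
    (partialEuler 1 (2 * N) : R⟦X⟧) * partialEuler 4 N * ∏ j ∈ range N, (1 + X ^ (2 * j + 1)) =
      partialEuler 2 N * partialEuler 2 (2 * N) := by
  unfold partialEuler
  rw [prod_range_two_mul, prod_range_two_mul, ← prod_mul_distrib, ← prod_mul_distrib,
    ← prod_mul_distrib]
  exact prod_congr rfl fun j _ => by ring

theorem prod_one_add_X_pow_mul_one_add_X_pow (N : ℕ) :
    (∏ j ∈ range N, (1 + X ^ (j + 1)) * (1 + X ^ j) : R⟦X⟧) * (1 + X ^ N) =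
      2 * (∏ j ∈ range N, (1 + X ^ (j + 1))) ^ 2 := by
  rw [prod_mul_distrib, mul_assoc, ← prod_range_succ (fun j => (1 + X ^ j : R⟦X⟧)),
    prod_range_succ']
  ring

/-- The Gaussian binomial coefficient `[a + b, a]` in `q = X ^ w`. -/
noncomputable def gaussBinom (w : ℕ) : ℕ → ℕ → R⟦X⟧
  | 0, _ => 1
  | _ + 1, 0 => 1
  | a + 1, b + 1 => gaussBinom w a (b + 1) + X ^ (w * (a + 1)) * gaussBinom w (a + 1) b

theorem gaussBinom_zero_right (w a : ℕ) : (gaussBinom w a 0 : R⟦X⟧) = 1 := by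
  cases a <;> simp [gaussBinom]

theorem gaussBinom_mul_partialEuler (w a b : ℕ) :
    (gaussBinom w a b : R⟦X⟧) * partialEuler w a * partialEuler w b = partialEuler w (a + b) := by
  induction a generalizing b with
  | zero => simp [gaussBinom, partialEuler]
  | succ a iha =>
    induction b with
    | zero => simp [gaussBinom_zero_right, partialEuler]
    | succ b ihb =>
      have h1 := iha (b + 1)
      rw [partialEuler_succ w b] at h1
      rw [partialEuler_succ w a, show a + 1 + b = a + (b + 1) by ring] at ihb
      rw [gaussBinom, partialEuler_succ w a, partialEuler_succ w b,
        show a + 1 + (b + 1) = a + (b + 1) + 1 by ring, partialEuler_succ,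
        show w * (a + (b + 1) + 1) = w * (a + 1) + w * (b + 1) by ring, pow_add]
      linear_combination (1 - X ^ (w * (a + 1))) * h1 +
        X ^ (w * (a + 1)) * (1 - X ^ (w * (b + 1))) * ihb

theorem gaussBinom_comm {w : ℕ} (hw : 0 < w) (a b : ℕ) :
    (gaussBinom w a b : R⟦X⟧) = gaussBinom w b a := by
  refine ((isUnit_partialEuler hw a).mul (isUnit_partialEuler hw b)).mul_right_cancel ?_
  rw [← mul_assoc, gaussBinom_mul_partialEuler, mul_comm (partialEuler w a), ← mul_assoc,
    gaussBinom_mul_partialEuler, add_comm]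

noncomputable def gaussBinomInt (w : ℕ) (a b : ℤ) : R⟦X⟧ :=
  if 0 ≤ a ∧ 0 ≤ b then gaussBinom w a.toNat b.toNat else 0

theorem gaussBinomInt_natCast (w p q : ℕ) :
    gaussBinomInt w p q = (gaussBinom w p q : R⟦X⟧) := by
  simp [gaussBinomInt]

theorem gaussBinomInt_of_neg (w : ℕ) {a b : ℤ} (h : a < 0 ∨ b < 0) :
    gaussBinomInt w a b = (0 : R⟦X⟧) := by
  rw [gaussBinomInt, if_neg]
  omega

theorem gaussBinomInt_comm {w : ℕ} (hw : 0 < w) (a b : ℤ) :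
    (gaussBinomInt w a b : R⟦X⟧) = gaussBinomInt w b a := by
  simp only [gaussBinomInt, and_comm, gaussBinom_comm hw a.toNat]

theorem gaussBinomInt_add_one_add_one (w : ℕ) {a b : ℤ} (hab : -1 ≤ a + b) :
    (gaussBinomInt w (a + 1) (b + 1) : R⟦X⟧) =
      gaussBinomInt w a (b + 1) + X ^ (w * (a + 1).toNat) * gaussBinomInt w (a + 1) b := by
  rcases lt_or_ge a (-1) with ha | ha
  · simp [gaussBinomInt_of_neg w (a := a + 1) (Or.inl (by omega)),
      gaussBinomInt_of_neg w (a := a) (Or.inl (by omega))]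
  rcases lt_or_ge b (-1) with hb | hb
  · simp [gaussBinomInt_of_neg w (b := b + 1) (Or.inr (by omega)),
      gaussBinomInt_of_neg w (b := b) (Or.inr (by omega))]
  rcases ha.eq_or_lt with rfl | ha
  · obtain ⟨q, rfl⟩ := Int.eq_ofNat_of_zero_le (by omega : 0 ≤ b)
    rw [show (-1 : ℤ) + 1 = ((0 : ℕ) : ℤ) by norm_num, ← Nat.cast_add_one,
      gaussBinomInt_natCast, gaussBinomInt_natCast, gaussBinomInt_of_neg w (Or.inl (by omega))]
    simp [gaussBinom]
  rcases hb.eq_or_lt with rfl | hb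
  · obtain ⟨p, rfl⟩ := Int.eq_ofNat_of_zero_le (by omega : 0 ≤ a)
    rw [show (-1 : ℤ) + 1 = ((0 : ℕ) : ℤ) by norm_num, ← Nat.cast_add_one,
      gaussBinomInt_natCast, gaussBinomInt_natCast, gaussBinomInt_of_neg w (Or.inr (by omega))]
    simp [gaussBinom_zero_right]
  obtain ⟨p, rfl⟩ := Int.eq_ofNat_of_zero_le (by omega : 0 ≤ a)
  obtain ⟨q, rfl⟩ := Int.eq_ofNat_of_zero_le (by omega : 0 ≤ b)
  simp only [← Nat.cast_add_one, gaussBinomInt_natCast, Int.toNat_natCast]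
  rw [gaussBinom]

theorem gaussBinomInt_add_one_add_one' {w : ℕ} (hw : 0 < w) {a b : ℤ} (hab : -1 ≤ a + b) :
    (gaussBinomInt w (a + 1) (b + 1) : R⟦X⟧) =
      gaussBinomInt w (a + 1) b + X ^ (w * (b + 1).toNat) * gaussBinomInt w a (b + 1) := by
  rw [gaussBinomInt_comm hw, gaussBinomInt_add_one_add_one w (by omega),
    gaussBinomInt_comm hw b, gaussBinomInt_comm hw (b + 1)]

theorem gaussBinomInt_three_term {w : ℕ} (hw : 0 < w) {a b : ℤ} (hab : 0 ≤ a + b) :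
    (gaussBinomInt w (a + 1) (b + 1) : R⟦X⟧) =
      (1 + X ^ (w * (a + b + 1).toNat)) * gaussBinomInt w a b +
        X ^ (w * (b + 1).toNat) * gaussBinomInt w (a - 1) (b + 1) +
        X ^ (w * (a + 1).toNat) * gaussBinomInt w (a + 1) (b - 1) := by
  have h1 := gaussBinomInt_add_one_add_one (R := R) w (a := a) (b := b - 1) (by omega)
  have h2 := gaussBinomInt_add_one_add_one (R := R) w (a := a - 1) (b := b) (by omega)
  rw [sub_add_cancel] at h1 h2
  rw [gaussBinomInt_add_one_add_one' hw (by omega), h1, h2]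
  by_cases hneg : a < 0 ∨ b < 0
  · rw [gaussBinomInt_of_neg w hneg]
    ring
  · rw [show w * (a + b + 1).toNat = w * (b + 1).toNat + w * a.toNat by
      rw [← mul_add]; congr 1; omega, pow_add]
    ring

theorem X_pow_mul_gaussBinomInt_succ {w u : ℕ} {e : ℤ → ℕ} (hw : 0 < w) (hu : u ≤ w)
    (he : ∀ k, (e k : ℤ) = e (k - 1) + w * k - u) {N : ℕ} {k : ℤ}
    (hk : k ∈ Icc (-(N + 1 : ℤ)) (N + 1)) :
    X ^ e k * gaussBinomInt w ((N : ℤ) + 1 + k) (N + 1 - k) =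
      (1 + X ^ (w * (2 * N + 1))) * (X ^ e k * gaussBinomInt w (N + k) (N - k)) +
        X ^ (w * N + (w - u)) * (X ^ e (k - 1) * gaussBinomInt w (N + (k - 1)) (N - (k - 1))) +
        X ^ (w * N + u) * (X ^ e (k + 1) * gaussBinomInt w (N + (k + 1)) (N - (k + 1)) : R⟦X⟧) := by
  have hk' := mem_Icc.1 hk
  have e1 : (N + k + (N - k) + 1).toNat = 2 * N + 1 := by omega
  have e2 : e k + w * (N - k + 1).toNat = w * N + (w - u) + e (k - 1) := by
    zify [hu]
    rw [Int.toNat_of_nonneg (by omega), he k]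
    ring
  have e3 : e k + w * (N + k + 1).toNat = w * N + u + e (k + 1) := by
    zify
    rw [Int.toNat_of_nonneg (by omega), he (k + 1), add_sub_cancel_right]
    ring
  rw [show (N : ℤ) + 1 + k = N + k + 1 by ring, show (N : ℤ) + 1 - k = N - k + 1 by ring,
    gaussBinomInt_three_term hw (by omega), e1, show (N : ℤ) + (k - 1) = N + k - 1 by ring,
    show (N : ℤ) - (k - 1) = N - k + 1 by ring, show (N : ℤ) + (k + 1) = N + k + 1 by ring,
    show (N : ℤ) - (k + 1) = N - k - 1 by ring, mul_add, mul_add,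
    ← mul_assoc (X ^ e k) (X ^ (w * (N - k + 1).toNat)), ← pow_add, e2,
    ← mul_assoc (X ^ e k) (X ^ (w * (N + k + 1).toNat)), ← pow_add, e3, pow_add, pow_add]
  ring

/-- A finite form of Jacobi's triple product, in `q = X ^ w` with `z = X ^ (w - u)`. -/
theorem sum_X_pow_mul_gaussBinomInt {w u : ℕ} {e : ℤ → ℕ} (hw : 0 < w) (hu : u ≤ w)
    (he : ∀ k, (e k : ℤ) = e (k - 1) + w * k - u) (he0 : e 0 = 0) (N : ℕ) :
    ∑ k ∈ Icc (-N : ℤ) N, X ^ e k * gaussBinomInt w (N + k) (N - k) =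
      ∏ j ∈ range N, ((1 + X ^ (w * j + (w - u))) * (1 + X ^ (w * j + u)) : R⟦X⟧) := by
  induction N with
  | zero => simp [he0, gaussBinomInt, gaussBinom]
  | succ N ih =>
    set T : ℤ → R⟦X⟧ := fun k => X ^ e k * gaussBinomInt w (N + k) (N - k) with hT
    have hT0 : ∀ k, (N : ℤ) < |k| → T k = 0 := fun k hk => by
      simp only [hT]
      rw [gaussBinomInt_of_neg w (by rcases lt_abs.1 hk with h | h <;> omega), mul_zero]
    have hstep : ∀ k ∈ Icc (-(N + 1 : ℤ)) (N + 1),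
        X ^ e k * gaussBinomInt w ((N : ℤ) + 1 + k) (N + 1 - k) =
          (1 + X ^ (w * (2 * N + 1))) * T (k + 0) + X ^ (w * N + (w - u)) * T (k + -1) +
            X ^ (w * N + u) * T (k + 1) := fun k hk => by
      simpa only [hT, add_zero, ← sub_eq_add_neg] using X_pow_mul_gaussBinomInt_succ hw hu he hk
    rw [Nat.cast_add_one, sum_congr rfl hstep, sum_add_distrib, sum_add_distrib,
      ← mul_sum, ← mul_sum, ← mul_sum, sum_Icc_add_eq_of_abs_gt hT0 (by norm_num),
      sum_Icc_add_eq_of_abs_gt hT0 (by norm_num), sum_Icc_add_eq_of_abs_gt hT0 (by norm_num),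
      prod_range_succ, ← ih, show w * (2 * N + 1) = (w * N + (w - u)) + (w * N + u) by
        zify [hu]; ring, pow_add]
    ring

section sumXPow

variable {ι κ κ' : Type*}

/-- `∑ₖ X ^ e k`, meaningful when the fibres of `e` are finite (an infinite fibre has `ncard` 0). -/
noncomputable def sumXPow (e : ι → ℕ) : R⟦X⟧ := mk fun n => ((e ⁻¹' {n}).ncard : R)

theorem coeff_sumXPow (e : ι → ℕ) (n : ℕ) :
    coeff n (sumXPow e : R⟦X⟧) = (e ⁻¹' {n}).ncard :=
  coeff_mk _ _

theorem sum_X_pow_smodEq_sumXPow {e : ι → ℕ} {s : Finset ι} {n : ℕ}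
    (hs : ∀ k, e k < n → k ∈ s) : ∑ k ∈ s, X ^ e k ≡ (sumXPow e : R⟦X⟧) [X^ n] := by
  refine smodEq_X_pow_iff.2 fun m hm => ?_
  simp only [map_sum, coeff_X_pow, sum_boole, coeff_sumXPow]
  rw [← Set.ncard_coe_finset]
  congr 2
  ext k
  simp only [coe_filter, Set.mem_ofPred_eq, Set.mem_preimage, Set.mem_singleton_iff]
  exact ⟨fun h => h.2.symm, fun h => ⟨hs k (by omega), h.symm⟩⟩

theorem expand_sumXPow {p : ℕ} (hp : p ≠ 0) (e : ι → ℕ) :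
    expand p hp (sumXPow e : R⟦X⟧) = sumXPow fun k => p * e k := by
  ext n
  simp only [coeff_expand, coeff_sumXPow]
  split_ifs with h
  · obtain ⟨m, rfl⟩ := h
    rw [Nat.mul_div_cancel_left m (Nat.pos_of_ne_zero hp),
      show (fun k => p * e k) ⁻¹' {p * m} = e ⁻¹' {m} by ext k; simp [hp]]
  · rw [show (fun k => p * e k) ⁻¹' {n} = ∅ from Set.eq_empty_of_forall_notMem
      fun k hk => h ⟨e k, hk.symm⟩, Set.ncard_empty, Nat.cast_zero]

theorem X_pow_mul_sumXPow (c : ℕ) (e : ι → ℕ) :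
    X ^ c * (sumXPow e : R⟦X⟧) = sumXPow fun k => e k + c := by
  ext n
  simp only [coeff_X_pow_mul', coeff_sumXPow]
  split_ifs with h
  · have hfib : (fun k => e k + c) ⁻¹' {n} = e ⁻¹' {n - c} := by
      ext k
      simp only [Set.mem_preimage, Set.mem_singleton_iff]
      omega
    rw [hfib]
  · rw [show (fun k => e k + c) ⁻¹' {n} = ∅ from Set.eq_empty_of_forall_notMem
      fun k (hk : e k + c = n) => h (by omega), Set.ncard_empty, Nat.cast_zero]

theorem sumXPow_eq_add {e : ι → ℕ} (he : ∀ n, (e ⁻¹' {n}).Finite) {f : κ → ι} {g : κ' → ι}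
    (hf : f.Injective) (hg : g.Injective) (hfg : IsCompl (Set.range f) (Set.range g)) :
    (sumXPow e : R⟦X⟧) = sumXPow (e ∘ f) + sumXPow (e ∘ g) := by
  ext n
  simp only [map_add, coeff_sumXPow, Set.preimage_comp]
  rw [← Set.ncard_image_of_injective _ hf, ← Set.ncard_image_of_injective _ hg,
    Set.image_preimage_eq_inter_range, Set.image_preimage_eq_inter_range, ← hfg.compl_eq,
    ← Set.sdiff_eq, ← Nat.cast_add, Set.ncard_inter_add_ncard_sdiff_eq_ncard _ _ (he n)]

end sumXPow

noncomputable def oddPart : R⟦X⟧ →+ R⟦X⟧ where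
  toFun f := mk fun n => coeff (2 * n + 1) f
  map_zero' := by ext; simp
  map_add' f g := by ext; simp

theorem coeff_oddPart (f : R⟦X⟧) (n : ℕ) : coeff n (oddPart f) = coeff (2 * n + 1) f :=
  coeff_mk _ (fun n => coeff (2 * n + 1) f)

theorem oddPart_expand_add_X_mul_expand (a b : R⟦X⟧) :
    oddPart (σ a + X * σ b) = b := by
  ext n
  rw [coeff_oddPart, map_add, coeff_succ_X_mul, coeff_expand_mul,
    coeff_expand_of_not_dvd _ _ _ (by omega), zero_add]

theorem oddPart_expand (a : R⟦X⟧) : oddPart (σ a) = 0 := by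
  simpa using oddPart_expand_add_X_mul_expand a 0

theorem expand_add_X_mul_expand_oddPart (f : R⟦X⟧) :
    σ (mk fun n => coeff (2 * n) f) + X * σ (oddPart f) =
      f := by
  ext n
  obtain ⟨m, rfl | rfl⟩ := Nat.even_or_odd' n
  · rcases m with _ | m
    · simp
    · rw [map_add, coeff_expand_mul, coeff_mk, show 2 * (m + 1) = 2 * m + 1 + 1 by ring,
        coeff_succ_X_mul, coeff_expand_of_not_dvd _ _ _ (by omega), add_zero]
  · rw [map_add, coeff_succ_X_mul, coeff_expand_mul, coeff_oddPart,
      coeff_expand_of_not_dvd _ _ _ (by omega), zero_add]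

theorem oddPart_mul_expand (f h : R⟦X⟧) :
    oddPart (f * σ h) = oddPart f * h := by
  conv_lhs => rw [← expand_add_X_mul_expand_oddPart f]
  rw [add_mul, mul_assoc, ← map_mul, ← map_mul, oddPart_expand_add_X_mul_expand]

theorem dvd_oddPart_of_expand_dvd {d f : R⟦X⟧} (h : σ d ∣ f) :
    d ∣ oddPart f := by
  obtain ⟨g, rfl⟩ := h
  rw [mul_comm, oddPart_mul_expand]
  exact dvd_mul_left d _

theorem oddPart_cube_expand_add_X_mul_expand (a b : R⟦X⟧) :
    oddPart ((σ a + X * σ b) ^ 3) =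
      3 * a ^ 2 * b + X * b ^ 3 := by
  rw [← oddPart_expand_add_X_mul_expand (a ^ 3 + 3 * X * a * b ^ 2) (3 * a ^ 2 * b + X * b ^ 3)]
  congr 1
  simp only [map_add, map_mul, map_pow, map_ofNat, expand_X]
  ring

end PowerSeries

theorem E_smodEq_partialEuler {w n m : ℕ} (hw : 0 < w) (hnm : n ≤ m) :
    E w ≡ partialEuler w m [X^ (n + 1)] := by
  refine smodEq_X_pow_iff.2 fun i hi => ?_
  have hIcc : ∏ j ∈ Icc 1 i, (1 - X ^ (w * j) : ℤ⟦X⟧) = partialEuler w i := by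
    rw [partialEuler, ← Finset.Ico_add_one_right_eq_Icc, prod_Ico_eq_prod_range,
      Nat.add_sub_cancel]
    simp [add_comm]
  rw [E, coeff_mk, hIcc]
  exact (smodEq_X_pow_iff.1 (partialEuler_smodEq hw (by omega : i ≤ m)) i i.lt_succ_self).symm

theorem expand_E {p : ℕ} (hp : p ≠ 0) {w : ℕ} (hw : 0 < w) : expand p hp (E w) = E (p * w) :=
  eq_of_forall_smodEq_X_pow_succ fun n => by
    have h := expand_smodEq hp (E_smodEq_partialEuler hw (le_refl n))
    rw [expand_partialEuler] at h
    exact h.trans (E_smodEq_partialEuler (Nat.mul_pos (Nat.pos_of_ne_zero hp) hw) le_rfl).symm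

theorem E_ne_zero (w : ℕ) : E w ≠ 0 := fun h => by
  simpa [h] using constantCoeff_E w

theorem gaussBinom_mul_E_smodEq {w n a b : ℕ} (hw : 0 < w) (ha : n ≤ a) (hb : n ≤ b) :
    gaussBinom w a b * E w ≡ 1 [X^ (n + 1)] := by
  refine SModEq.of_mul_right_of_isUnit (isUnit_partialEuler hw b) ?_
  have hEa : E w ≡ partialEuler w a [X^ (n + 1)] := E_smodEq_partialEuler hw ha
  have hEb : E w ≡ partialEuler w b [X^ (n + 1)] := E_smodEq_partialEuler hw hb
  have hEab : E w ≡ partialEuler w (a + b) [X^ (n + 1)] := E_smodEq_partialEuler hw (by omega)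
  have key := ((SModEq.rfl (x := gaussBinom w a b)).mul hEa).mul
    (SModEq.rfl (x := partialEuler w b))
  rw [gaussBinom_mul_partialEuler] at key
  rw [one_mul]
  exact key.trans (hEab.symm.trans hEb)

/-- The triple product identity of `sum_X_pow_mul_gaussBinomInt` in the limit `N → ∞`. -/
theorem sumXPow_smodEq_E_mul_prod {w u : ℕ} {e : ℤ → ℕ} (hw : 0 < w) (hu : u ≤ w)
    (he : ∀ k, (e k : ℤ) = e (k - 1) + w * k - u) (he0 : e 0 = 0) (habs : ∀ k, |k| ≤ e k + 1)
    {n N : ℕ} (hN : 2 * n + 1 ≤ N) :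
    sumXPow e ≡ E w * ∏ j ∈ range N, (1 + X ^ (w * j + (w - u))) * (1 + X ^ (w * j + u))
      [X^ (n + 1)] := by
  rw [← sum_X_pow_mul_gaussBinomInt hw hu he he0 N, mul_sum]
  refine (sum_X_pow_smodEq_sumXPow fun k hk => ?_).symm.trans (SModEq.sum fun k _ => ?_)
  · have := habs k
    rw [mem_Icc, ← abs_le]
    omega
  rcases lt_or_ge n (e k) with hlt | hle
  · have h1 : (X ^ e k : ℤ⟦X⟧) ≡ 0 [X^ (n + 1)] := by
      simpa using X_pow_mul_smodEq_zero hlt (1 : ℤ⟦X⟧)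
    have h2 : E w * (X ^ e k * gaussBinomInt w (N + k) (N - k)) ≡ 0 [X^ (n + 1)] := by
      rw [mul_left_comm]
      exact X_pow_mul_smodEq_zero hlt _
    exact h1.trans h2.symm
  · have := habs k
    rw [abs_le] at this
    have hG := gaussBinom_mul_E_smodEq hw (a := (N + k : ℤ).toNat) (b := (N - k : ℤ).toNat)
      (n := n) (by omega) (by omega)
    rw [gaussBinomInt, if_pos (by omega), mul_left_comm, mul_comm (E w)]
    simpa using (SModEq.rfl (x := (X ^ e k : ℤ⟦X⟧))).mul hG.symm

def triangle (k : ℤ) : ℕ := (k * (k + 1) / 2).toNat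

theorem two_mul_triangle (k : ℤ) : 2 * (triangle k : ℤ) = k * (k + 1) := by
  obtain ⟨r, hr⟩ := Int.even_mul_succ_self k
  have : 0 ≤ r := by rcases le_or_gt 0 k with hk | hk <;> nlinarith
  rw [triangle, hr, ← two_mul, Int.mul_ediv_cancel_left r two_ne_zero, Int.toNat_of_nonneg this]

theorem triangle_neg_sub_one (k : ℤ) : triangle (-1 - k) = triangle k := by
  rw [triangle, triangle]
  ring_nf

theorem triangle_sub_one (k : ℤ) : (triangle k : ℤ) = triangle (k - 1) + k := by
  have h1 := two_mul_triangle k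
  have h2 := two_mul_triangle (k - 1)
  linarith

theorem natAbs_sq_sub_one (k : ℤ) :
    ((k.natAbs ^ 2 : ℕ) : ℤ) = ((k - 1).natAbs ^ 2 : ℕ) + 2 * k - 1 := by
  push_cast
  rw [sq_abs, sq_abs]
  ring

theorem abs_le_triangle_add_one (k : ℤ) : |k| ≤ triangle k + 1 := by
  have := two_mul_triangle k
  rw [abs_le]
  constructor <;> nlinarith

theorem abs_le_natAbs_sq_add_one (k : ℤ) : |k| ≤ (k.natAbs ^ 2 : ℕ) + 1 := by
  push_cast
  nlinarith [sq_nonneg (|k| - 1), abs_nonneg k]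

theorem finite_preimage_of_abs_le {e : ℤ → ℕ} (he : ∀ k, |k| ≤ e k + 1) (n : ℕ) :
    (e ⁻¹' {n}).Finite :=
  (Set.finite_Icc (-(n + 1 : ℤ)) (n + 1)).subset fun k (hk : e k = n) => by
    have := he k
    rw [hk, abs_le] at this
    exact this

noncomputable def ramanujanPsi : ℤ⟦X⟧ := sumXPow fun k : ℕ => triangle k

noncomputable def ramanujanPhi : ℤ⟦X⟧ := sumXPow fun k : ℤ => k.natAbs ^ 2

local notation "φ" => ramanujanPhi
local notation "ψ" => ramanujanPsi

theorem isCompl_range_natCast_range_neg_one_sub :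
    IsCompl (Set.range ((↑) : ℕ → ℤ)) (Set.range fun k : ℕ => -1 - (k : ℤ)) := by
  constructor
  · rw [Set.disjoint_left]
    rintro _ ⟨a, rfl⟩ ⟨b, hb : -1 - (b : ℤ) = a⟩
    omega
  · refine codisjoint_iff_le_sup.2 fun k _ => ?_
    rcases le_or_gt 0 k with hk | hk
    · exact Or.inl ⟨k.toNat, by omega⟩
    · exact Or.inr ⟨(-1 - k).toNat, show -1 - ((-1 - k).toNat : ℤ) = k by omega⟩

theorem sumXPow_triangle : (sumXPow triangle : ℤ⟦X⟧) = 2 * ψ := by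
  rw [sumXPow_eq_add (finite_preimage_of_abs_le abs_le_triangle_add_one) Nat.cast_injective
    (fun a b h => by simpa using h) isCompl_range_natCast_range_neg_one_sub, two_mul]
  congr 2
  ext k
  exact triangle_neg_sub_one k

theorem ramanujanPsi_mul_E_one : ψ * E 1 = E 2 ^ 2 := by
  have h2 : (2 : ℤ⟦X⟧) ≠ 0 := fun h => two_ne_zero (C_injective (R := ℤ) (by simpa using h))
  refine mul_left_cancel₀ h2 (eq_of_forall_smodEq_X_pow_succ fun n => ?_)
  have hθ := sumXPow_smodEq_E_mul_prod one_pos (Nat.zero_le 1)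
    (fun k => by rw [triangle_sub_one]; ring) rfl abs_le_triangle_add_one (le_refl (2 * n + 1))
  simp only [one_mul, Nat.sub_zero, add_zero, sumXPow_triangle] at hθ
  set N := 2 * n + 1
  set P : ℤ⟦X⟧ := ∏ j ∈ range N, (1 + X ^ (j + 1))
  have hP : partialEuler 1 N * P = partialEuler 2 N := by
    simpa using partialEuler_mul_prod_one_add (R := ℤ) 1 N
  have hE1 : E 1 ≡ partialEuler 1 N [X^ (n + 1)] := E_smodEq_partialEuler one_pos (by omega)
  have hE2 : E 2 ≡ partialEuler 2 N [X^ (n + 1)] := E_smodEq_partialEuler two_pos (by omega)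
  calc 2 * (ψ * E 1) = 2 * ψ * E 1 := by ring
    _ ≡ E 1 * (∏ j ∈ range N, (1 + X ^ (j + 1)) * (1 + X ^ j)) * E 1 [X^ (n + 1)] :=
        hθ.mul SModEq.rfl
    _ ≡ partialEuler 1 N * (∏ j ∈ range N, (1 + X ^ (j + 1)) * (1 + X ^ j)) * partialEuler 1 N *
          (1 + X ^ N) [X^ (n + 1)] := by
        simpa using ((hE1.mul SModEq.rfl).mul hE1).mul
          (one_add_X_pow_smodEq_one (by omega : n + 1 ≤ N)).symm
    _ = 2 * (partialEuler 1 N * P) ^ 2 := by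
        linear_combination partialEuler 1 N ^ 2 * prod_one_add_X_pow_mul_one_add_X_pow (R := ℤ) N
    _ ≡ 2 * E 2 ^ 2 [X^ (n + 1)] := by
        rw [hP]
        exact SModEq.rfl.mul (hE2.symm.pow 2)

theorem ramanujanPhi_mul_E_one_sq_mul_E_four_sq : φ * E 1 ^ 2 * E 4 ^ 2 = E 2 ^ 5 := by
  refine eq_of_forall_smodEq_X_pow_succ fun n => ?_
  have hθ := sumXPow_smodEq_E_mul_prod two_pos one_le_two natAbs_sq_sub_one (by simp)
    abs_le_natAbs_sq_add_one (le_refl (2 * n + 1))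
  norm_num only [prod_mul_distrib] at hθ
  rw [show (sumXPow fun k : ℤ => k.natAbs ^ 2 : ℤ⟦X⟧) = φ from rfl] at hθ
  set N := 2 * n + 1
  set O : ℤ⟦X⟧ := ∏ j ∈ range N, (1 + X ^ (2 * j + 1))
  have hE1 : E 1 ≡ partialEuler 1 (2 * N) [X^ (n + 1)] := E_smodEq_partialEuler one_pos (by omega)
  have hE2 : E 2 ≡ partialEuler 2 N [X^ (n + 1)] := E_smodEq_partialEuler two_pos (by omega)
  have hE2' : E 2 ≡ partialEuler 2 (2 * N) [X^ (n + 1)] :=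
    E_smodEq_partialEuler two_pos (by omega)
  have hE4 : E 4 ≡ partialEuler 4 N [X^ (n + 1)] := E_smodEq_partialEuler four_pos (by omega)
  calc φ * E 1 ^ 2 * E 4 ^ 2
      ≡ E 2 * (O * O) * partialEuler 1 (2 * N) ^ 2 * partialEuler 4 N ^ 2 [X^ (n + 1)] :=
        (hθ.mul (hE1.pow 2)).mul (hE4.pow 2)
    _ = E 2 * (partialEuler 2 N * partialEuler 2 (2 * N)) ^ 2 := by
        rw [← partialEuler_mul_partialEuler_mul_prod]
        ring
    _ ≡ E 2 * (E 2 * E 2) ^ 2 [X^ (n + 1)] := SModEq.rfl.mul ((hE2.symm.mul hE2'.symm).pow 2)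
    _ = E 2 ^ 5 := by ring

theorem ramanujanPsi_sq : ψ ^ 2 = φ * σ ψ := by
  have hE2 : σ (E 1) = E 2 := expand_E two_ne_zero one_pos
  have hE4 : σ (E 2) = E 4 := expand_E two_ne_zero two_pos
  refine mul_right_cancel₀ (mul_ne_zero (mul_ne_zero (pow_ne_zero 2 (E_ne_zero 1))
    (pow_ne_zero 2 (E_ne_zero 4))) (E_ne_zero 2)) ?_
  calc ψ ^ 2 * (E 1 ^ 2 * E 4 ^ 2 * E 2) = (ψ * E 1) ^ 2 * E 4 ^ 2 * E 2 := by ring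
    _ = (φ * E 1 ^ 2 * E 4 ^ 2) * σ (ψ * E 1) := by
        rw [ramanujanPsi_mul_E_one, ramanujanPhi_mul_E_one_sq_mul_E_four_sq, map_pow, hE4]
        ring
    _ = φ * σ ψ * (E 1 ^ 2 * E 4 ^ 2 * E 2) := by
        rw [map_mul, hE2]
        ring

theorem ramanujanPsi_pow_two_mul (m : ℕ) : ψ ^ (2 * m) = φ ^ m * σ (ψ ^ m) := by
  rw [pow_mul, ramanujanPsi_sq, mul_pow, map_pow]

theorem ramanujanPhi_eq : φ = σ (σ φ) + 2 * X * σ (σ (σ ψ)) := by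
  have hcompl : IsCompl (Set.range fun k : ℤ => 2 * k) (Set.range fun k : ℤ => 2 * k + 1) := by
    simpa using Int.isCompl_even_odd
  have heven : (fun k : ℤ => k.natAbs ^ 2) ∘ (fun k => 2 * k) =
      fun k => 2 * (2 * k.natAbs ^ 2) := by
    funext k
    simp only [Function.comp_apply, Int.natAbs_mul]
    ring
  have hodd : (fun k : ℤ => k.natAbs ^ 2) ∘ (fun k => 2 * k + 1) =
      fun k => 2 * (2 * (2 * triangle k)) + 1 := by
    funext k
    simp only [Function.comp_apply]
    zify
    rw [sq_abs]
    linear_combination -4 * two_mul_triangle k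
  have h4 : (sumXPow fun k : ℤ => 2 * (2 * k.natAbs ^ 2) : ℤ⟦X⟧) = σ (σ φ) := by
    rw [ramanujanPhi, expand_sumXPow, expand_sumXPow]
  have h8 : (sumXPow fun k : ℤ => 2 * (2 * (2 * triangle k)) + 1 : ℤ⟦X⟧) =
      2 * X * σ (σ (σ ψ)) := by
    rw [← X_pow_mul_sumXPow, ← expand_sumXPow two_ne_zero, ← expand_sumXPow two_ne_zero,
      ← expand_sumXPow two_ne_zero, sumXPow_triangle]
    simp only [map_mul, map_ofNat, pow_one]
    ring
  calc φ = sumXPow ((fun k : ℤ => k.natAbs ^ 2) ∘ fun k => 2 * k) +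
        sumXPow ((fun k : ℤ => k.natAbs ^ 2) ∘ fun k => 2 * k + 1) :=
      sumXPow_eq_add (finite_preimage_of_abs_le abs_le_natAbs_sq_add_one)
        (fun a b h => by simpa using h) (fun a b h => by simpa using h) hcompl
    _ = σ (σ φ) + 2 * X * σ (σ (σ ψ)) := by rw [heven, hodd, h4, h8]

theorem eq_zero_of_eq_neg_expand {D : ℤ⟦X⟧} (h : D = -σ D) : D = 0 := by
  ext n
  induction n using Nat.strong_induction_on with
  | _ n ih =>
    have hn := congrArg (coeff n) h
    rw [map_neg, coeff_expand] at hn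
    rw [map_zero]
    split_ifs at hn with h2
    · obtain ⟨m, rfl⟩ := h2
      rcases Nat.eq_zero_or_pos m with rfl | hm
      · simp only [mul_zero, Nat.zero_div] at hn ⊢
        omega
      · rw [hn, Nat.mul_div_cancel_left m two_pos, ih m (by omega), map_zero, neg_zero]
    · simpa using hn

/-- The defect `φ ^ 2 - σ φ ^ 2 - 4 X σ (σ ψ) ^ 2` is its own negative under `σ` by
`ramanujanPhi_eq` and `ramanujanPsi_sq`, which forces it to vanish. -/
theorem ramanujanPhi_sq : φ ^ 2 = σ (φ ^ 2) + X * σ (4 * σ (ψ ^ 2)) := by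
  have hψ : σ (σ ψ) ^ 2 = σ (σ φ) * σ (σ (σ ψ)) := by
    rw [← map_pow, ← map_pow, ramanujanPsi_sq, map_mul, map_mul]
  have key : φ ^ 2 - σ φ ^ 2 - 4 * X * σ (σ ψ) ^ 2 =
      -σ (φ ^ 2 - σ φ ^ 2 - 4 * X * σ (σ ψ) ^ 2) := by
    simp only [map_sub, map_mul, map_pow, map_ofNat, expand_X]
    rw [hψ]
    nth_rewrite 1 [ramanujanPhi_eq]
    ring
  simp only [map_mul, map_pow, map_ofNat]
  linear_combination eq_zero_of_eq_neg_expand key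

theorem ramanujanPhi_pow_four :
    φ ^ 4 = σ (φ ^ 4 + X * (4 * σ (ψ ^ 2)) ^ 2) + X * σ (8 * φ ^ 2 * σ (ψ ^ 2)) := by
  rw [show φ ^ 4 = (φ ^ 2) ^ 2 by ring]
  nth_rewrite 1 [ramanujanPhi_sq]
  simp only [map_add, map_mul, map_pow, map_ofNat, expand_X]
  ring

theorem dvd_oddPart_ramanujanPhi_pow_twelve :
    (256 : ℤ⟦X⟧) ∣ oddPart (φ ^ 12) - 24 * φ ^ 10 * σ (ψ ^ 2) := by
  rw [show φ ^ 12 = (φ ^ 4) ^ 3 by ring, ramanujanPhi_pow_four,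
    oddPart_cube_expand_add_X_mul_expand]
  exact ⟨5 * X * φ ^ 6 * σ ψ ^ 6 + 24 * X ^ 2 * φ ^ 2 * σ ψ ^ 10, by
    simp only [map_pow]; ring⟩

theorem dvd_oddPart_ramanujanPhi_pow_thirtytwo : (64 : ℤ⟦X⟧) ∣ oddPart (φ ^ 32) := by
  have h4 : ((4 : ℕ) : ℤ⟦X⟧) ∣ φ ^ 2 - σ (φ ^ 2) := ⟨X * σ (σ (ψ ^ 2)), by
    nth_rewrite 1 [ramanujanPhi_sq]; simp only [map_mul, map_ofNat]; push_cast; ring⟩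
  obtain ⟨g, hg⟩ := dvd_sub_pow_of_dvd_sub h4 2
  have hφ : φ ^ 32 = σ (φ ^ 32) + σ 64 * g := by
    rw [map_ofNat, show φ ^ 32 = (φ ^ 2) ^ 4 ^ 2 by ring, map_pow σ (φ ^ 2)]
    push_cast at hg
    linear_combination hg
  rw [hφ, map_add, oddPart_expand, zero_add]
  exact dvd_oddPart_of_expand_dvd (dvd_mul_right _ _)

local notation "ε" => ((E1unit⁻¹ : (ℤ⟦X⟧)ˣ) : ℤ⟦X⟧)

theorem inv_E_one_eq : ε = ψ * σ (ε ^ 2) := by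
  have h1 : ε * E 1 = 1 := E1unit.inv_mul
  have hE2 : σ (E 1) = E 2 := expand_E two_ne_zero one_pos
  have h2 : σ ε * E 2 = 1 := by rw [← hE2, ← map_mul, h1, map_one]
  have h3 : ψ = E 2 ^ 2 * ε := by
    rw [← ramanujanPsi_mul_E_one, mul_assoc, mul_comm (E 1), h1, mul_one]
  rw [h3, map_pow]
  linear_combination (-ε) * (σ ε * E 2 + 1) * h2

theorem inv_E_one_pow (k : ℕ) : ε ^ k = ψ ^ k * σ (ε ^ (2 * k)) := by
  conv_lhs => rw [inv_E_one_eq]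
  rw [mul_pow, ← map_pow, ← pow_mul, mul_comm 2 k]

theorem oddPart_inv_E_one_pow_eight :
    oddPart (ε ^ 8) = φ ^ 12 * σ (8 * ψ ^ 12 * ε ^ 32) := by
  rw [show ε ^ 8 = ψ ^ 8 * σ (ε ^ 16) from inv_E_one_pow 8,
    show ψ ^ 8 = φ ^ 4 * σ (ψ ^ 4) from ramanujanPsi_pow_two_mul 4, mul_assoc, ← map_mul,
    oddPart_mul_expand, ramanujanPhi_pow_four, oddPart_expand_add_X_mul_expand,
    show ε ^ 16 = ψ ^ 16 * σ (ε ^ 32) from inv_E_one_pow 16]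
  calc 8 * φ ^ 2 * σ (ψ ^ 2) * (ψ ^ 4 * (ψ ^ 16 * σ (ε ^ 32)))
      = 8 * φ ^ 2 * σ (ψ ^ 2) * ψ ^ 20 * σ (ε ^ 32) := by ring
    _ = φ ^ 12 * σ (8 * ψ ^ 12 * ε ^ 32) := by
        rw [show ψ ^ 20 = φ ^ 10 * σ (ψ ^ 10) from ramanujanPsi_pow_two_mul 10]
        simp only [map_mul, map_pow, map_ofNat]
        ring

theorem two_pow_eleven_dvd_oddPart_oddPart_oddPart_inv_E_one_pow_eight :
    (2048 : ℤ⟦X⟧) ∣ oddPart (oddPart (oddPart (ε ^ 8))) := by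
  obtain ⟨r, hr⟩ := dvd_oddPart_ramanujanPhi_pow_twelve
  obtain ⟨g, hg⟩ := dvd_oddPart_ramanujanPhi_pow_thirtytwo
  have hε : ε ^ 32 = ψ ^ 32 * σ (ε ^ 64) := inv_E_one_pow 32
  have hψ : ψ ^ 44 = φ ^ 22 * σ (ψ ^ 22) := ramanujanPsi_pow_two_mul 22
  have hsplit : oddPart (φ ^ 12) * (8 * ψ ^ 12 * ε ^ 32) =
      φ ^ 32 * σ (192 * ψ ^ 24 * ε ^ 64) + σ 2048 * (r * ψ ^ 12 * ε ^ 32) := by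
    simp only [map_mul, map_pow, map_ofNat] at hr hε hψ ⊢
    linear_combination (8 * ψ ^ 12 * ε ^ 32) * hr + 192 * φ ^ 10 * σ ψ ^ 2 * ψ ^ 12 * hε +
      192 * φ ^ 10 * σ ψ ^ 2 * σ ε ^ 64 * hψ
  rw [oddPart_inv_E_one_pow_eight, oddPart_mul_expand, hsplit, map_add, oddPart_mul_expand, hg]
  exact dvd_add ⟨6 * g * ψ ^ 24 * ε ^ 64, by ring⟩ (dvd_oddPart_of_expand_dvd (dvd_mul_right _ _))

theorem pneg8_8n7_congruence (n : ℕ) :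
    (2048 : ℤ) ∣ pr (-8) (8 * n + 7) := by
  have hpr : pr (-8) (8 * n + 7) = coeff n (oddPart (oddPart (oddPart (ε ^ 8)))) := by
    rw [pr, show (-8 : ℤ) = -((8 : ℕ) : ℤ) from rfl, zpow_neg, zpow_natCast, ← inv_pow,
      Units.val_pow_eq_pow_val]
    simp only [coeff_oddPart]
    ring_nf
  obtain ⟨g, hg⟩ := two_pow_eleven_dvd_oddPart_oddPart_oddPart_inv_E_one_pow_eight
  rw [hpr, hg, ← map_ofNat (C (R := ℤ)), coeff_C_mul]
  exact dvd_mul_right _ _
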